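/- For every integer M ≥ 1 and for ρ-almost every pair (x,x') ∈ X × X, for every N ∈ ℕ there exists n > N with D_n(x,x') ∈ {0, M}; in particular, the stopping time τ = inf{n > σ : D_n ∈ {0,M}} is finite ρ-almost everywhere for any almost-everywhere-finite stopping time σ. -/

import Mathlib

open MeasureTheory Filter
open scoped ENNReal

/-- The Euler path space: a point is an infinite edge path in the Euler graph,
`x n : Fin (n+2)` being the label of the edge chosen from level `n` to level `n+1`. -/
abbrev EulerPath : Type := ∀ n : ℕ, Fin (n + 2)

/-- Vertex labels: `kv x n` is the `k` with the path `x` passing through vertex `(n,k)`.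
A label `(x n : ℕ) ≤ kv x n` is a left turn (edge to `(n+1, kv x n)`), a larger label
is a right turn (edge to `(n+1, kv x n + 1)`). -/
def kv (x : EulerPath) : ℕ → ℕ
  | 0 => 0
  | n + 1 => if (x n : ℕ) ≤ kv x n then kv x n else kv x n + 1

/-- The symmetric measure: the product over `n` of the uniform probability measures on
`Fin (n+2)`, characterized as the probability measure giving each cylinder of length `n`
the measure `∏_{i<n} 1/(i+2)`. -/
def IsSymmetricMeasure (η : Measure EulerPath) : Prop :=
  IsProbabilityMeasure η ∧
    ∀ (n : ℕ) (c : EulerPath),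
      η {x | ∀ i < n, x i = c i} = ∏ i ∈ Finset.range n, ((i : ℝ≥0∞) + 2)⁻¹

/-- The vertex distance `D_n(x,x') = |k_n(x) - k_n(x')|` as an integer. -/
def D (n : ℕ) (p : EulerPath × EulerPath) : ℤ :=
  |(kv p.1 n : ℤ) - (kv p.2 n : ℤ)|

/-! We show that `D_n` vanishes infinitely often. Given the first `n` edges of both paths, a
walker at vertex `k` turns right with probability `(n + 1 - k) / (n + 2)`; since `D` moves by
at most one per step it cannot change sign before vanishing, so on `{D_n ≠ 0}` the conditional
expectation of `D_{n+1}` is `(n + 1) / (n + 2) · D_n`. Hence the expectation of `D_n` on the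
event that `D_m ≠ 0` for all `N < m ≤ n` is `C / (n + 1)`, and as `D_n ≥ 1` there, the
probability of that event tends to `0`. -/

open Finset
open scoped Nat

lemma kv_le (x : EulerPath) : ∀ n, kv x n ≤ n
  | 0 => le_rfl
  | n + 1 => by
      have := kv_le x n
      rw [kv]
      split <;> omega

lemma kv_congr {x y : EulerPath} : ∀ {n : ℕ}, (∀ i < n, x i = y i) → kv x n = kv y n
  | 0, _ => rfl
  | n + 1, h => by
      rw [kv, kv, kv_congr fun i hi => h i (hi.trans n.lt_succ_self), h n n.lt_succ_self]

def turn (k t : ℕ) : ℕ := if t ≤ k then k else k + 1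

lemma kv_succ (x : EulerPath) (n : ℕ) : kv x (n + 1) = turn (kv x n) (x n) := rfl

lemma sum_range_turn (k m : ℕ) : ∑ t ∈ range m, turn k t = m * k + (m - (k + 1)) := by
  induction m with
  | zero => simp
  | succ m ih =>
    rw [sum_range_succ, ih, turn, add_one_mul]
    split <;> omega

lemma sum_sum_abs_turn_sub_of_lt {m k k' : ℕ} (hk : k < m) (hk' : k' < k) :
    ∑ t : Fin m, ∑ t' : Fin m, |(turn k t : ℤ) - turn k' t'| =
      m * (m - 1) * ((k : ℤ) - k') := by
  have hsum : ∀ j < m, ∑ t : Fin m, (turn j t : ℤ) = m * j + (m - (j + 1)) := fun j hj => by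
    rw [Fin.sum_univ_eq_sum_range (fun t => (turn j t : ℤ)), ← Nat.cast_sum, sum_range_turn]
    push_cast [Nat.cast_sub hj]
    ring
  have hnonneg : ∀ t t' : ℕ, 0 ≤ (turn k t : ℤ) - turn k' t' := fun t t' => by
    unfold turn
    split_ifs <;> omega
  simp only [abs_of_nonneg (hnonneg _ _), sum_sub_distrib, sum_const, card_univ, Fintype.card_fin,
    nsmul_eq_mul, ← mul_sum, hsum k hk, hsum k' (hk'.trans hk)]
  ring

lemma sum_sum_abs_turn_sub {m k k' : ℕ} (hk : k < m) (hk' : k' < m) (hne : k ≠ k') :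
    ∑ t : Fin m, ∑ t' : Fin m, |(turn k t : ℤ) - turn k' t'| =
      m * (m - 1) * |(k : ℤ) - k'| := by
  rcases hne.lt_or_gt with hlt | hlt
  · simp_rw [abs_sub_comm (turn k _ : ℤ)]
    rw [sum_comm, sum_sum_abs_turn_sub_of_lt hk' hlt, abs_sub_comm, abs_of_pos (by omega)]
  · rw [sum_sum_abs_turn_sub_of_lt hk hlt, abs_of_pos (by omega)]

lemma D_congr {p q : EulerPath × EulerPath} {n m : ℕ} (h₁ : ∀ i < n, p.1 i = q.1 i)
    (h₂ : ∀ i < n, p.2 i = q.2 i) (hm : m ≤ n) : D m p = D m q := by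
  rw [D, D, kv_congr fun i hi => h₁ i (hi.trans_le hm),
    kv_congr fun i hi => h₂ i (hi.trans_le hm)]

def Separated (N n : ℕ) (p : EulerPath × EulerPath) : Prop :=
  ∀ m, N < m → m ≤ n → D m p ≠ 0

lemma separated_succ_iff {N n : ℕ} {p : EulerPath × EulerPath} (h : N ≤ n) :
    Separated N (n + 1) p ↔ Separated N n p ∧ D (n + 1) p ≠ 0 := by
  refine ⟨fun hp => ⟨fun m hNm hmn => hp m hNm (hmn.trans n.le_succ), hp _ (by omega) le_rfl⟩,
    fun ⟨hp, hD⟩ m hNm hmn => ?_⟩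
  rcases (Nat.le_succ_iff.mp hmn) with hmn | rfl
  exacts [hp m hNm hmn, hD]

lemma separated_congr {N n : ℕ} {p q : EulerPath × EulerPath} (h₁ : ∀ i < n, p.1 i = q.1 i)
    (h₂ : ∀ i < n, p.2 i = q.2 i) : Separated N n p ↔ Separated N n q :=
  forall₂_congr fun m _ => imp_congr_right fun hm => by rw [D_congr h₁ h₂ hm]

abbrev Prefix (n : ℕ) : Type := ∀ i : Fin n, Fin (i.1 + 2)

namespace Prefix

variable {n : ℕ}

def toPath (c : Prefix n) : EulerPath := fun i => if h : i < n then c ⟨i, h⟩ else 0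

def ofPath (n : ℕ) (x : EulerPath) : Prefix n := fun i => x i

lemma toPath_ofPath (x : EulerPath) {i : ℕ} (hi : i < n) : (ofPath n x).toPath i = x i := by
  simp [toPath, ofPath, hi]

def snoc (c : Prefix n) (t : Fin (n + 2)) : Prefix (n + 1) :=
  Fin.snoc (α := fun i : Fin (n + 1) => Fin (i.1 + 2)) c t

lemma toPath_snoc_of_lt (c : Prefix n) (t : Fin (n + 2)) {i : ℕ} (hi : i < n) :
    (c.snoc t).toPath i = c.toPath i := by
  simp [toPath, snoc, hi, hi.trans n.lt_succ_self, Fin.snoc]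

lemma toPath_snoc_self (c : Prefix n) (t : Fin (n + 2)) : (c.snoc t).toPath n = t := by
  simp [toPath, snoc, Fin.snoc]

lemma sum_succ {M : Type*} [AddCommMonoid M] (f : Prefix (n + 1) → M) :
    ∑ c, f c = ∑ c : Prefix n, ∑ t : Fin (n + 2), f (c.snoc t) := by
  rw [← (Fin.snocEquiv fun i : Fin (n + 1) => Fin (i.1 + 2)).sum_comp, Fintype.sum_prod_type,
    sum_comm]
  rfl

lemma sum_pair_succ {M : Type*} [AddCommMonoid M] (f : Prefix (n + 1) × Prefix (n + 1) → M) :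
    ∑ c, f c = ∑ c : Prefix n × Prefix n, ∑ t : Fin (n + 2), ∑ t' : Fin (n + 2),
      f (c.1.snoc t, c.2.snoc t') := by
  simp only [Fintype.sum_prod_type, sum_succ]
  exact sum_congr rfl fun _ _ => sum_comm

def pair (c : Prefix n × Prefix n) : EulerPath × EulerPath := (c.1.toPath, c.2.toPath)

lemma D_pair_snoc (c : Prefix n × Prefix n) (t t' : Fin (n + 2)) :
    D (n + 1) (pair (c.1.snoc t, c.2.snoc t')) =
      |(turn (kv c.1.toPath n) t : ℤ) - turn (kv c.2.toPath n) t'| := by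
  simp only [D, pair, kv_succ, toPath_snoc_self]
  rw [kv_congr fun i hi => toPath_snoc_of_lt c.1 t hi,
    kv_congr fun i hi => toPath_snoc_of_lt c.2 t' hi]

lemma separated_pair_snoc_iff {N : ℕ} (c : Prefix n × Prefix n) (t t' : Fin (n + 2)) :
    Separated N n (pair (c.1.snoc t, c.2.snoc t')) ↔ Separated N n (pair c) :=
  separated_congr (fun _ hi => toPath_snoc_of_lt c.1 t hi) (fun _ hi => toPath_snoc_of_lt c.2 t' hi)

end Prefix

open Prefix

open scoped Classical in
noncomputable def separatedPairs (N n : ℕ) : Finset (Prefix n × Prefix n) :=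
  univ.filter fun c => Separated N n (pair c)

/-- Up to the factor `((n+1)!)⁻²`, the expectation of `D_n` on the event `Separated N n`. -/
noncomputable def separatedDistSum (N n : ℕ) : ℤ :=
  ∑ c ∈ separatedPairs N n, D n (pair c)

lemma mem_separatedPairs {N n : ℕ} {c : Prefix n × Prefix n} :
    c ∈ separatedPairs N n ↔ Separated N n (pair c) := by
  classical
  simp [separatedPairs]

lemma card_separatedPairs_le {N n : ℕ} (h : N < n) :
    (#(separatedPairs N n) : ℤ) ≤ separatedDistSum N n := by
  rw [card_eq_sum_ones, Nat.cast_sum, Nat.cast_one, separatedDistSum]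
  refine sum_le_sum fun c hc => ?_
  have hD : D n (pair c) ≠ 0 := mem_separatedPairs.mp hc n h le_rfl
  have : 0 ≤ D n (pair c) := abs_nonneg _
  omega

lemma separatedDistSum_succ {N n : ℕ} (h : N < n) :
    separatedDistSum N (n + 1) = (n + 1) * (n + 2) * separatedDistSum N n := by
  classical
  have hstep : ∀ c : Prefix n × Prefix n,
      ∑ t : Fin (n + 2), ∑ t' : Fin (n + 2),
        (if Separated N (n + 1) (pair (c.1.snoc t, c.2.snoc t'))
          then D (n + 1) (pair (c.1.snoc t, c.2.snoc t')) else 0) =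
      if Separated N n (pair c) then (n + 1) * (n + 2) * D n (pair c) else 0 := by
    intro c
    simp only [separated_succ_iff h.le, separated_pair_snoc_iff]
    split_ifs with hc
    · have hne : kv c.1.toPath n ≠ kv c.2.toPath n := fun heq =>
        hc n h le_rfl (by simp [D, pair, heq])
      have hterm : ∀ x : ℤ, (if Separated N n (pair c) ∧ ¬x = 0 then x else 0) = x := fun x => by
        by_cases hx : x = 0 <;> simp [hc, hx]
      simp only [hterm, D_pair_snoc]
      rw [sum_sum_abs_turn_sub (by linarith [kv_le c.1.toPath n]) (by linarith [kv_le c.2.toPath n])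
        hne]
      push_cast
      rw [D, pair]
      ring
    · simp [hc]
  simp only [separatedDistSum, separatedPairs, sum_filter, mul_sum]
  rw [sum_pair_succ]
  exact sum_congr rfl fun c _ => (hstep c).trans (by rw [mul_ite, mul_zero])

lemma succ_mul_separatedDistSum {N n : ℕ} (h : N < n) :
    (n + 1) * separatedDistSum N n * ((N + 2)! : ℤ) ^ 2 =
      (N + 2) * separatedDistSum N (N + 1) * ((n + 1)! : ℤ) ^ 2 := by
  induction n, h using Nat.le_induction with
  | base => push_cast; ring
  | succ n hn ih =>
    rw [separatedDistSum_succ hn, Nat.factorial_succ (n + 1)]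
    push_cast at ih ⊢
    linear_combination (n + 2) ^ 2 * ih

lemma IsSymmetricMeasure.measure_cylinder {η : Measure EulerPath} (hη : IsSymmetricMeasure η)
    (n : ℕ) (c : EulerPath) : η {x | ∀ i < n, x i = c i} = ((n + 1)! : ℝ≥0∞)⁻¹ := by
  rw [hη.2, ← ENNReal.prod_inv_distrib fun i _ j _ _ => Or.inr (by simp),
    ← prod_range_add_one_eq_factorial, prod_range_succ']
  push_cast
  simp [add_assoc, one_add_one_eq_two]

lemma measure_separated_le {η : Measure EulerPath} (hη : IsSymmetricMeasure η) (N n : ℕ) :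
    (η.prod η) {p | Separated N n p} ≤ #(separatedPairs N n) / ((n + 1)! : ℝ≥0∞) ^ 2 := by
  have := hη.1
  have hcover : {p | Separated N n p} ⊆ ⋃ c ∈ separatedPairs N n,
      {x | ∀ i < n, x i = c.1.toPath i} ×ˢ {x | ∀ i < n, x i = c.2.toPath i} := by
    intro p hp
    refine Set.mem_iUnion₂.mpr ⟨(ofPath n p.1, ofPath n p.2), mem_separatedPairs.mpr ?_, ?_⟩
    · exact (separated_congr (fun i hi => toPath_ofPath p.1 hi)
        (fun i hi => toPath_ofPath p.2 hi)).mpr hp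
    · exact ⟨fun i hi => (toPath_ofPath p.1 hi).symm, fun i hi => (toPath_ofPath p.2 hi).symm⟩
  refine (measure_mono hcover).trans ((measure_biUnion_finset_le _ _).trans (le_of_eq ?_))
  simp only [Measure.prod_prod, hη.measure_cylinder, sum_const, nsmul_eq_mul, div_eq_mul_inv,
    ← sq, ENNReal.inv_pow]

lemma exists_measureReal_separated_le {η : Measure EulerPath} (hη : IsSymmetricMeasure η)
    (N : ℕ) :
    ∃ K : ℝ, ∀ n, N < n → (η.prod η).real {p | Separated N n p} ≤ K / (n + 1) := by
  refine ⟨(N + 2) * separatedDistSum N (N + 1) / ((N + 2)! : ℝ) ^ 2, fun n h => ?_⟩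
  have hfin : (#(separatedPairs N n) : ℝ≥0∞) / ((n + 1)! : ℝ≥0∞) ^ 2 ≠ ⊤ :=
    ENNReal.div_ne_top (by simp) (by positivity)
  have hcard : (#(separatedPairs N n) : ℝ) ≤ separatedDistSum N n := by
    exact_mod_cast card_separatedPairs_le h
  have hsum : (n + 1) * (separatedDistSum N n : ℝ) * ((N + 2)! : ℝ) ^ 2 =
      (N + 2) * separatedDistSum N (N + 1) * ((n + 1)! : ℝ) ^ 2 := by
    exact_mod_cast succ_mul_separatedDistSum h
  calc (η.prod η).real {p | Separated N n p}
      ≤ (#(separatedPairs N n) : ℝ) / ((n + 1)! : ℝ) ^ 2 := by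
        simpa [measureReal_def, ENNReal.toReal_div] using
          ENNReal.toReal_mono hfin (measure_separated_le hη N n)
    _ ≤ separatedDistSum N n / ((n + 1)! : ℝ) ^ 2 := by gcongr
    _ = _ := by
        field_simp
        linear_combination hsum

lemma measure_setOf_forall_D_ne_zero {η : Measure EulerPath} (hη : IsSymmetricMeasure η)
    (N : ℕ) :
    (η.prod η) {p | ∀ n, N < n → D n p ≠ 0} = 0 := by
  have := hη.1
  obtain ⟨K, hK⟩ := exists_measureReal_separated_le hη N
  set B := {p | ∀ n, N < n → D n p ≠ 0}
  have hsub : ∀ n, B ⊆ {p | Separated N n p} := fun _ _ hp m hNm _ => hp m hNm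
  have hbound : ∀ n, N < n → (η.prod η).real B ≤ K / (n + 1) :=
    fun n h => (measureReal_mono (hsub n)).trans (hK n h)
  have hlim : Tendsto (fun n : ℕ => K / ((n : ℝ) + 1)) atTop (nhds 0) := by
    simpa [div_eq_mul_inv] using tendsto_one_div_add_atTop_nhds_zero_nat.const_mul K
  rw [← measureReal_eq_zero_iff]
  exact le_antisymm (ge_of_tendsto hlim (eventually_atTop.mpr ⟨N + 1, hbound⟩))
    measureReal_nonneg

theorem euler_distance_hits_zero_or_M_general
    (η : Measure EulerPath) (hη : IsSymmetricMeasure η) (M : ℕ) :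
    ∀ᵐ p ∂(η.prod η), ∀ N : ℕ, ∃ n, N < n ∧ (D n p = 0 ∨ D n p = (M : ℤ)) := by
  exact ae_all_iff.mpr fun N => measure_mono_null (fun p hp n hNn hD => hp ⟨n, hNn, Or.inl hD⟩)
    (measure_setOf_forall_D_ne_zero hη N)

/-- For every integer `M ≥ 1`, `ρ`-almost every pair of paths (`ρ = η × η`) has, beyond
every level `N`, some level `n > N` at which the vertex distance `D_n` is `0` or `M`;
in particular the stopping time `τ = inf {n > σ : D_n ∈ {0,M}}` is finite `ρ`-a.e. for
any a.e.-finite stopping time `σ`. -/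
theorem euler_distance_hits_zero_or_M
    (η : Measure EulerPath) (hη : IsSymmetricMeasure η) (M : ℕ) (hM : 1 ≤ M) :
    ∀ᵐ p ∂(η.prod η), ∀ N : ℕ, ∃ n, N < n ∧ (D n p = 0 ∨ D n p = (M : ℤ)) :=
  euler_distance_hits_zero_or_M_general η hη M
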